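/- arXiv:2603.29560 — 5 statements merged into one kernel-verified Lean document; each statement's English description precedes it below -/
import Mathlib

section
/- Let h : ℝⁿ → ℝ and Δh : ℝⁿ → ℝ be continuous functions, let γ > 0, and define D := {x ∈ ℝⁿ | h(x) ≤ γ} and S := {x ∈ ℝⁿ | h(x) ≤ 0}. Assume D is compact and Δh(x) > 0 for all x ∈ D with h(x) > 0. Suppose a sequence x : ℕ → ℝⁿ satisfies h(x(0)) ≤ γ and, for every t ∈ ℕ: if h(x(t)) ≤ 0 then h(x(t+1)) ≤ 0, and if 0 < h(x(t)) ≤ γ then h(x(t+1)) ≤ h(x(t)) − Δh(x(t)). Then for every δ > 0 there exists T ∈ ℕ such that h(x(t)) ≤ δ for all t ≥ T; in particular, if additionally inf{Δh(x) | x ∈ D, h(x) > 0} > 0, then there exists T with h(x(t)) ≤ 0 for all t ≥ T. -/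
/-!
Inside the domain `h ≤ γ` the value of `h` along a trajectory never rises above `max (h x) 0`,
so every sublevel set `h ≤ c` with `c ≥ 0` is forward invariant. Above a level `δ > 0` the
decrease `Δh` is bounded below by some `ε > 0`, because it is positive and continuous on the
compact set `δ ≤ h ≤ γ`; hence `h(x(t))` drops by at least `ε` per step until it falls below
`δ`, which happens after finitely many steps, and it stays there by invariance. A positive
infimum of `Δh` on `0 < h ≤ γ` runs the same argument with `δ = 0`.
-/

theorem exists_le_of_lt_imp_le_sub {a : ℕ → ℝ} {δ ε : ℝ} (hε : 0 < ε)
    (ha : ∀ t, δ < a t → a (t + 1) ≤ a t - ε) : ∃ t, a t ≤ δ := by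
  by_contra! habove
  have hlin : ∀ t : ℕ, a t ≤ a 0 - t * ε := by
    intro t
    induction t with
    | zero => simp
    | succ t ih =>
      have := ha t (habove t)
      push_cast
      linarith
  obtain ⟨N, hN⟩ := exists_nat_gt ((a 0 - δ) / ε)
  rw [div_lt_iff₀ hε] at hN
  linarith [hlin N, habove N]

namespace CBF

variable {X : Type*} {h Δh : X → ℝ} {γ : ℝ} {x : ℕ → X}

structure IsTrajectory (h Δh : X → ℝ) (γ : ℝ) (x : ℕ → X) : Prop where
  safe : ∀ t, h (x t) ≤ 0 → h (x (t + 1)) ≤ 0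
  decrease : ∀ t, 0 < h (x t) → h (x t) ≤ γ → h (x (t + 1)) ≤ h (x t) - Δh (x t)

namespace IsTrajectory

theorem step_le (hx : IsTrajectory h Δh γ x) (hΔ : ∀ y, 0 < h y → h y ≤ γ → 0 ≤ Δh y)
    {c : ℝ} (hc : 0 ≤ c) {t : ℕ} (htc : h (x t) ≤ c) (htγ : h (x t) ≤ γ) :
    h (x (t + 1)) ≤ c := by
  rcases le_or_gt (h (x t)) 0 with hsafe | hpos
  · exact (hx.safe t hsafe).trans hc
  · linarith [hx.decrease t hpos htγ, hΔ _ hpos htγ]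

theorem forall_ge_le_of_le (hx : IsTrajectory h Δh γ x) (hΔ : ∀ y, 0 < h y → h y ≤ γ → 0 ≤ Δh y)
    (hxγ : ∀ t, h (x t) ≤ γ) {c : ℝ} (hc : 0 ≤ c) {T : ℕ} (hT : h (x T) ≤ c) :
    ∀ t ≥ T, h (x t) ≤ c := by
  intro t ht
  induction t, ht using Nat.le_induction with
  | base => exact hT
  | succ t _ ih => exact hx.step_le hΔ hc ih (hxγ t)

theorem le_of_init_le (hx : IsTrajectory h Δh γ x) (hΔ : ∀ y, 0 < h y → h y ≤ γ → 0 ≤ Δh y)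
    (hγ : 0 ≤ γ) (hx0 : h (x 0) ≤ γ) (t : ℕ) : h (x t) ≤ γ := by
  induction t with
  | zero => exact hx0
  | succ t ih => exact hx.step_le hΔ hγ ih ih

theorem eventually_le (hx : IsTrajectory h Δh γ x) (hΔ : ∀ y, 0 < h y → h y ≤ γ → 0 ≤ Δh y)
    (hxγ : ∀ t, h (x t) ≤ γ) {δ ε : ℝ} (hδ : 0 ≤ δ) (hε : 0 < ε)
    (hεΔ : ∀ y, δ < h y → h y ≤ γ → ε ≤ Δh y) : ∃ T, ∀ t ≥ T, h (x t) ≤ δ := by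
  have hdrop : ∀ t, δ < h (x t) → h (x (t + 1)) ≤ h (x t) - ε := fun t ht => by
    linarith [hx.decrease t (hδ.trans_lt ht) (hxγ t), hεΔ _ ht (hxγ t)]
  obtain ⟨T, hT⟩ := exists_le_of_lt_imp_le_sub hε hdrop
  exact ⟨T, hx.forall_ge_le_of_le hΔ hxγ hδ hT⟩

end IsTrajectory

end CBF

open CBF in
theorem stmt_1_general {n : ℕ} (h : (Fin n → ℝ) → ℝ) (hcont : Continuous h)
    (Δh : (Fin n → ℝ) → ℝ) (hΔcont : Continuous Δh)
    (γ : ℝ) (hγ : 0 < γ)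
    (D : Set (Fin n → ℝ)) (hD : D = {x | h x ≤ γ})
    (hDcompact : IsCompact D)
    (hΔpos : ∀ y ∈ D, 0 < h y → 0 < Δh y)
    (x : ℕ → Fin n → ℝ) (hx0 : h (x 0) ≤ γ)
    (hsafe : ∀ t, h (x t) ≤ 0 → h (x (t + 1)) ≤ 0)
    (hdec : ∀ t, 0 < h (x t) → h (x t) ≤ γ →
      h (x (t + 1)) ≤ h (x t) - Δh (x t)) :
    (∀ δ > (0 : ℝ), ∃ T : ℕ, ∀ t ≥ T, h (x t) ≤ δ) ∧
      (0 < sInf (Δh '' {y | y ∈ D ∧ 0 < h y}) →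
        ∃ T : ℕ, ∀ t ≥ T, h (x t) ≤ 0) := by
  subst hD
  have hx : IsTrajectory h Δh γ x := ⟨hsafe, hdec⟩
  have hΔ : ∀ y, 0 < h y → h y ≤ γ → 0 ≤ Δh y := fun y hy hyγ => (hΔpos y hyγ hy).le
  have hxγ := hx.le_of_init_le hΔ hγ.le hx0
  refine ⟨fun δ hδ => ?_, fun hinf => ?_⟩
  · have hK : IsCompact {y | h y ≤ γ ∧ δ ≤ h y} :=
      hDcompact.inter_right (isClosed_le continuous_const hcont)
    obtain ⟨ε, hε, hεΔ⟩ := hK.exists_forall_le' hΔcont.continuousOn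
      fun y hy => hΔpos y hy.1 (hδ.trans_le hy.2)
    exact hx.eventually_le hΔ hxγ hδ.le hε fun y hδy hyγ => hεΔ y ⟨hyγ, hδy.le⟩
  · have hbdd : BddBelow (Δh '' {y | h y ≤ γ ∧ 0 < h y}) :=
      (hDcompact.image hΔcont).bddBelow.mono (Set.image_mono fun y hy => hy.1)
    exact hx.eventually_le hΔ hxγ le_rfl hinf
      fun y hy hyγ => csInf_le hbdd ⟨y, ⟨hyγ, hy⟩, rfl⟩

/-- Recovery guarantee of a discrete-time CBF: any trajectory starting in the
domain `D = {x | h x ≤ γ}` that satisfies the CBF step conditions has `h(x(t))` eventually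
below any `δ > 0`; if moreover the infimum of `Δh` over `{x ∈ D | h x > 0}` is positive,
the trajectory reaches the safe set `S = {x | h x ≤ 0}` in finite time and stays there. -/
theorem stmt_1 {n : ℕ} (h : (Fin n → ℝ) → ℝ) (hcont : Continuous h)
    (Δh : (Fin n → ℝ) → ℝ) (hΔcont : Continuous Δh)
    (γ : ℝ) (hγ : 0 < γ)
    (D : Set (Fin n → ℝ)) (hD : D = {x | h x ≤ γ})
    (S : Set (Fin n → ℝ)) (hS : S = {x | h x ≤ 0})
    (hDcompact : IsCompact D)
    (hΔpos : ∀ y ∈ D, 0 < h y → 0 < Δh y)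
    (x : ℕ → Fin n → ℝ) (hx0 : h (x 0) ≤ γ)
    (hsafe : ∀ t, h (x t) ≤ 0 → h (x (t + 1)) ≤ 0)
    (hdec : ∀ t, 0 < h (x t) → h (x t) ≤ γ →
      h (x (t + 1)) ≤ h (x t) - Δh (x t)) :
    (∀ δ > (0 : ℝ), ∃ T : ℕ, ∀ t ≥ T, h (x t) ≤ δ) ∧
      (0 < sInf (Δh '' {y | y ∈ D ∧ 0 < h y}) →
        ∃ T : ℕ, ∀ t ≥ T, h (x t) ≤ 0) :=
  stmt_1_general h hcont Δh hΔcont γ hγ D hD hDcompact hΔpos x hx0 hsafe hdec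
end

section
/- Consider a multi-agent system with agents ℓ ∈ {1,…,L}, neighbor index sets N_ℓ ⊆ {1,…,L} with ℓ ∈ N_ℓ, nonempty local input sets U_ℓ ⊆ ℝ^{m_ℓ}, and local dynamics f_ℓ : (×_{j∈N_ℓ} ℝ^{n_j}) × ℝ^{m_ℓ} → ℝ^{n_ℓ}. Let γ_f > 0 and for each ℓ let h_ℓ : ℝ^{n_ℓ} → ℝ be nonnegative with D_ℓ := {x_ℓ | h_ℓ(x_ℓ) ≤ γ_f}, let Δh_ℓ : ℝ^{n_ℓ} → ℝ and β_ℓ : ×_{j∈N_ℓ} ℝ^{n_j} → ℝ be functions such that: (a) for all x with x_j ∈ D_j for all j, inf_{u_ℓ ∈ U_ℓ} h_ℓ(f_ℓ(x_{N_ℓ}, u_ℓ)) − h_ℓ(x_ℓ) ≤ −Δh_ℓ(x_ℓ) + β_ℓ(x_{N_ℓ}), where x_{N_ℓ} denotes the subvector (x_j)_{j∈N_ℓ}; and (b) for all x with x_j ∈ D_j for all j, Σ_{ℓ=1}^L β_ℓ(x_{N_ℓ}) ≤ 0. Then for every global state x = (x_1,…,x_L) with x_j ∈ D_j for all j, the summed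 candidate h(x) := Σ_ℓ h_ℓ(x_ℓ) satisfies inf{ Σ_ℓ h_ℓ(f_ℓ(x_{N_ℓ}, u_ℓ)) | (u_1,…,u_L) ∈ U_1 × ⋯ × U_L } − h(x) ≤ −Σ_{ℓ=1}^L Δh_ℓ(x_ℓ). -/
/-- Summing the relaxed local s-CBF decrease conditions (with relaxation
functions `β_ℓ` whose network-wide sum is nonpositive on the product of the local domains)
yields a network-level decrease of `h(x) = Σ_ℓ h_ℓ(x_ℓ)` by `Σ_ℓ Δh_ℓ(x_ℓ)`, where the
infimum is taken over the product input set. -/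
theorem stmt_6 {L : ℕ} (hL : 1 ≤ L) (n m : Fin L → ℕ)
    (Nb : Fin L → Finset (Fin L)) (hself : ∀ ℓ, ℓ ∈ Nb ℓ)
    (U : (ℓ : Fin L) → Set (Fin (m ℓ) → ℝ)) (hUne : ∀ ℓ, (U ℓ).Nonempty)
    (f : (ℓ : Fin L) → ((j : {j // j ∈ Nb ℓ}) → (Fin (n j.1) → ℝ)) →
          (Fin (m ℓ) → ℝ) → (Fin (n ℓ) → ℝ))
    (γf : ℝ) (hγf : 0 < γf)
    (h : (ℓ : Fin L) → (Fin (n ℓ) → ℝ) → ℝ)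
    (hnonneg : ∀ ℓ xℓ, 0 ≤ h ℓ xℓ)
    (Δh : (ℓ : Fin L) → (Fin (n ℓ) → ℝ) → ℝ)
    (β : (ℓ : Fin L) → (((j : {j // j ∈ Nb ℓ}) → (Fin (n j.1) → ℝ)) → ℝ))
    -- (a) relaxed local decrease condition on the product of the local domains
    (hdec : ∀ ℓ, ∀ x : (j : Fin L) → Fin (n j) → ℝ, (∀ j, h j (x j) ≤ γf) →
      sInf ((fun uℓ => h ℓ (f ℓ (fun j => x j.1) uℓ)) '' U ℓ) - h ℓ (x ℓ)
        ≤ -Δh ℓ (x ℓ) + β ℓ (fun j => x j.1))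
    -- (b) network-wide relaxation condition on the product of the local domains
    (hβ : ∀ x : (j : Fin L) → Fin (n j) → ℝ, (∀ j, h j (x j) ≤ γf) →
      ∑ ℓ, β ℓ (fun j => x j.1) ≤ 0) :
    ∀ x : (j : Fin L) → Fin (n j) → ℝ, (∀ j, h j (x j) ≤ γf) →
      sInf ((fun u : (ℓ : Fin L) → Fin (m ℓ) → ℝ =>
          ∑ ℓ, h ℓ (f ℓ (fun j => x j.1) (u ℓ))) '' Set.univ.pi U)
        - (∑ ℓ, h ℓ (x ℓ)) ≤ -∑ ℓ, Δh ℓ (x ℓ) := by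
  intro x hx
  set S : Fin L → Set ℝ := fun ℓ => (fun uℓ => h ℓ (f ℓ (fun j => x j.1) uℓ)) '' U ℓ with hS
  have hSne : ∀ ℓ, (S ℓ).Nonempty := fun ℓ => (hUne ℓ).image _
  have key : sInf ((fun u : (ℓ : Fin L) → Fin (m ℓ) → ℝ =>
      ∑ ℓ, h ℓ (f ℓ (fun j => x j.1) (u ℓ))) '' Set.univ.pi U) ≤ ∑ ℓ, sInf (S ℓ) := by
    apply le_of_forall_pos_le_add
    intro ε hε
    have hLpos : (0 : ℝ) < L := by exact_mod_cast hL
    have hstep : ∀ ℓ : Fin L, ∃ uℓ ∈ U ℓ,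
        h ℓ (f ℓ (fun j => x j.1) uℓ) < sInf (S ℓ) + ε / L := by
      intro ℓ
      have : sInf (S ℓ) < sInf (S ℓ) + ε / L := by
        linarith [div_pos hε hLpos]
      obtain ⟨y, hy, hylt⟩ := exists_lt_of_csInf_lt (hSne ℓ) this
      obtain ⟨uℓ, huℓ, rfl⟩ := hy
      exact ⟨uℓ, huℓ, hylt⟩
    choose u hu huval using hstep
    have hmem : u ∈ Set.univ.pi U := fun ℓ _ => hu ℓ
    have hinf_le : sInf ((fun u : (ℓ : Fin L) → Fin (m ℓ) → ℝ =>
        ∑ ℓ, h ℓ (f ℓ (fun j => x j.1) (u ℓ))) '' Set.univ.pi U)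
        ≤ ∑ ℓ, h ℓ (f ℓ (fun j => x j.1) (u ℓ)) := by
      apply csInf_le
      · refine ⟨0, ?_⟩
        rintro y ⟨v, _, rfl⟩
        exact Finset.sum_nonneg fun ℓ _ => hnonneg ℓ _
      · exact ⟨u, hmem, rfl⟩
    have : ∑ ℓ, h ℓ (f ℓ (fun j => x j.1) (u ℓ)) ≤ ∑ ℓ, (sInf (S ℓ) + ε / L) :=
      Finset.sum_le_sum fun ℓ _ => (huval ℓ).le
    have hsum : ∑ ℓ : Fin L, (sInf (S ℓ) + ε / L) = (∑ ℓ, sInf (S ℓ)) + ε := by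
      rw [Finset.sum_add_distrib, Finset.sum_const, Finset.card_univ, Fintype.card_fin,
        nsmul_eq_mul]
      field_simp
    linarith
  have hsum_dec : ∑ ℓ, sInf (S ℓ) - ∑ ℓ, h ℓ (x ℓ)
      ≤ ∑ ℓ, (-Δh ℓ (x ℓ) + β ℓ (fun j => x j.1)) := by
    rw [← Finset.sum_sub_distrib]
    exact Finset.sum_le_sum fun ℓ _ => hdec ℓ x hx
  have hβx := hβ x hx
  rw [Finset.sum_add_distrib, Finset.sum_neg_distrib] at hsum_dec
  linarith
end

section
/- Let L ∈ ℕ with L ≥ 1, γ_f > 0, and for each ℓ ∈ {1,…,L} let h_ℓ : ℝ^{n_ℓ} → ℝ be continuous and nonnegative with S_ℓ := {x_ℓ | h_ℓ(x_ℓ) = 0} and D_ℓ := {x_ℓ | h_ℓ(x_ℓ) ≤ γ_f}, and let Δh_ℓ : ℝ^{n_ℓ} → ℝ be continuous with Δh_ℓ(x_ℓ) ≥ 0 for all x_ℓ ∈ D_ℓ and Δh_ℓ(x_ℓ) > 0 for all x_ℓ ∈ D_ℓ ∖ S_ℓ. Define h(x) := Σ_ℓ h_ℓ(x_ℓ) and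 Δh(x) := Σ_ℓ Δh_ℓ(x_ℓ) on the global state space. Then Δh is continuous, and for every global state x with 0 < h(x) ≤ γ_f it holds that Δh(x) > 0. -/
/-- The summed decrease function `Δh(x) = Σ_ℓ Δh_ℓ(x_ℓ)` of local s-CBF
decrease functions is continuous and strictly positive on the global region of attraction
`{x | 0 < Σ_ℓ h_ℓ(x_ℓ) ≤ γ_f}`. -/
theorem stmt_8 {L : ℕ} (hL : 1 ≤ L) (γf : ℝ) (hγf : 0 < γf) (n : Fin L → ℕ)
    (h : (ℓ : Fin L) → (Fin (n ℓ) → ℝ) → ℝ)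
    (hcont : ∀ ℓ, Continuous (h ℓ))
    (hnonneg : ∀ ℓ xℓ, 0 ≤ h ℓ xℓ)
    (S : (ℓ : Fin L) → Set (Fin (n ℓ) → ℝ))
    (hS : ∀ ℓ, S ℓ = {xℓ | h ℓ xℓ = 0})
    (D : (ℓ : Fin L) → Set (Fin (n ℓ) → ℝ))
    (hD : ∀ ℓ, D ℓ = {xℓ | h ℓ xℓ ≤ γf})
    (Δh : (ℓ : Fin L) → (Fin (n ℓ) → ℝ) → ℝ)
    (hΔcont : ∀ ℓ, Continuous (Δh ℓ))
    (hΔnonneg : ∀ ℓ, ∀ xℓ ∈ D ℓ, 0 ≤ Δh ℓ xℓ)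
    (hΔpos : ∀ ℓ, ∀ xℓ ∈ D ℓ \ S ℓ, 0 < Δh ℓ xℓ) :
    Continuous (fun x : (ℓ : Fin L) → Fin (n ℓ) → ℝ => ∑ ℓ, Δh ℓ (x ℓ)) ∧
    ∀ x : (ℓ : Fin L) → Fin (n ℓ) → ℝ,
      0 < ∑ ℓ, h ℓ (x ℓ) → ∑ ℓ, h ℓ (x ℓ) ≤ γf → 0 < ∑ ℓ, Δh ℓ (x ℓ) := by
  constructor
  · exact continuous_finset_sum _ fun ℓ _ => (hΔcont ℓ).comp (continuous_apply ℓ)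
  · intro x hpos hle
    have hmem : ∀ ℓ, x ℓ ∈ D ℓ := by
      intro ℓ
      rw [hD]
      exact le_trans (Finset.single_le_sum (fun i _ => hnonneg i (x i)) (Finset.mem_univ ℓ)) hle
    obtain ⟨ℓ0, hℓ0⟩ : ∃ ℓ, 0 < h ℓ (x ℓ) := by
      by_contra hc
      push_neg at hc
      have : ∑ ℓ, h ℓ (x ℓ) = 0 :=
        le_antisymm (Finset.sum_nonpos fun i _ => hc i) (Finset.sum_nonneg fun i _ => hnonneg i (x i))
      linarith
    have hpos0 : 0 < Δh ℓ0 (x ℓ0) := by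
      apply hΔpos ℓ0
      refine ⟨hmem ℓ0, ?_⟩
      rw [hS]
      exact fun hz => absurd hz (ne_of_gt hℓ0)
    calc (0:ℝ) < Δh ℓ0 (x ℓ0) := hpos0
    _ ≤ ∑ ℓ, Δh ℓ (x ℓ) := Finset.single_le_sum (fun i _ => hΔnonneg i (x i) (hmem i)) (Finset.mem_univ ℓ0)
end

section
/- Consider a multi-agent system with agents ℓ ∈ {1,…,L}, neighbor index sets N_ℓ ⊆ {1,…,L} with ℓ ∈ N_ℓ, nonempty local input sets U_ℓ ⊆ ℝ^{m_ℓ}, and local dynamics f_ℓ : (×_{j∈N_ℓ} ℝ^{n_j}) × ℝ^{m_ℓ} → ℝ^{n_ℓ}. Let {h_ℓ}_{ℓ=1}^L be a set of structured CBFs: continuous functions h_ℓ : ℝ^{n_ℓ} → ℝ with h_ℓ ≥ 0, local safe sets S_ℓ := {x_ℓ | h_ℓ(x_ℓ) = 0} and domains D_ℓ := {x_ℓ | h_ℓ(x_ℓ) ≤ γ_f}, where γ_f > 0 and each D_ℓ, S_ℓ is nonempty and compact, together with continuous decrease functions Δh_ℓ : ℝ^{n_ℓ} → ℝ satisfying Δh_ℓ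 ≥ 0 on D_ℓ and Δh_ℓ(x_ℓ) > 0 for x_ℓ ∈ D_ℓ ∖ S_ℓ, and relaxation functions β_ℓ : ×_{j∈N_ℓ} ℝ^{n_j} → ℝ such that for all ℓ: (i) for all x with x_j ∈ D_j for all j, inf_{u_ℓ ∈ U_ℓ} h_ℓ(f_ℓ(x_{N_ℓ}, u_ℓ)) − h_ℓ(x_ℓ) ≤ −Δh_ℓ(x_ℓ) + β_ℓ(x_{N_ℓ}); (ii) for all x with x_j ∈ S_j for all j ∈ N_ℓ, inf_{u_ℓ ∈ U_ℓ} h_ℓ(f_ℓ(x_{N_ℓ}, u_ℓ)) = 0; (iii) for all x with x_j ∈ D_j for all j, Σ_{ℓ=1}^L β_ℓ(x_{N_ℓ}) ≤ 0. Then the function h(x) := Σ_{ℓ=1}^L h_ℓ(x_ℓ) is a network-level control barrier function: (1) S^glob := {x | h(x) ≤ 0} = S_1 × ⋯ × S_L and D^glob := {x | h(x) ≤ γ_f} are nonempty and compact, and h is continuous; (2) there exists a continuous function Δh with Δh(x) > 0 for all x ∈ D^glob ∖ S^glob such that for all x ∈ D^glob ∖ S^glob, inf{ Σ_ℓ h_ℓ(f_ℓ(x_{N_ℓ},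 u_ℓ)) | u ∈ U_1 × ⋯ × U_L } − h(x) ≤ −Δh(x); and (3) for all x ∈ S^glob, inf{ Σ_ℓ h_ℓ(f_ℓ(x_{N_ℓ}, u_ℓ)) | u ∈ U_1 × ⋯ × U_L } ≤ 0. -/
/-- Auxiliary: the infimum of a sum of nonnegative separable terms over a product
set is at most the sum of the infima. -/
lemma sInf_sum_le_sum_sInf {L : ℕ} (hL : 0 < L) {m : Fin L → ℕ}
    (U : (ℓ : Fin L) → Set (Fin (m ℓ) → ℝ)) (hUne : ∀ ℓ, (U ℓ).Nonempty)
    (g : (ℓ : Fin L) → (Fin (m ℓ) → ℝ) → ℝ) (hg : ∀ ℓ u, 0 ≤ g ℓ u) :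
    sInf ((fun u : (ℓ : Fin L) → Fin (m ℓ) → ℝ => ∑ ℓ, g ℓ (u ℓ)) '' Set.univ.pi U)
      ≤ ∑ ℓ, sInf (g ℓ '' U ℓ) := by
  have hbdd : BddBelow
      ((fun u : (ℓ : Fin L) → Fin (m ℓ) → ℝ => ∑ ℓ, g ℓ (u ℓ)) '' Set.univ.pi U) :=
    ⟨0, by rintro _ ⟨u, -, rfl⟩; exact Finset.sum_nonneg fun ℓ _ => hg ℓ (u ℓ)⟩
  refine le_of_forall_pos_le_add fun ε hε => ?_
  have hεL : 0 < ε / L := by positivity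
  have key : ∀ ℓ, ∃ uℓ ∈ U ℓ, g ℓ uℓ < sInf (g ℓ '' U ℓ) + ε / L := by
    intro ℓ
    obtain ⟨a, ⟨uℓ, huℓ, rfl⟩, ha⟩ := Real.lt_sInf_add_pos ((hUne ℓ).image _) hεL
    exact ⟨uℓ, huℓ, ha⟩
  choose u hu hlt using key
  have hmem : (fun ℓ => u ℓ) ∈ Set.univ.pi U := fun ℓ _ => hu ℓ
  calc sInf ((fun u : (ℓ : Fin L) → Fin (m ℓ) → ℝ => ∑ ℓ, g ℓ (u ℓ)) '' Set.univ.pi U)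
      ≤ ∑ ℓ, g ℓ (u ℓ) := csInf_le hbdd ⟨_, hmem, rfl⟩
    _ ≤ ∑ ℓ, (sInf (g ℓ '' U ℓ) + ε / L) := Finset.sum_le_sum fun ℓ _ => (hlt ℓ).le
    _ = ∑ ℓ, sInf (g ℓ '' U ℓ) + ε := by
        rw [Finset.sum_add_distrib, Finset.sum_const, Finset.card_univ, Fintype.card_fin,
          nsmul_eq_mul]
        have hL' : (L : ℝ) ≠ 0 := Nat.cast_ne_zero.mpr hL.ne'
        field_simp

/-- Theorem 1: Network-level CBF from s-CBFs: Given structured CBFs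
`{h_ℓ}` (nonnegative continuous local functions with nonempty compact safe sets
`S_ℓ = {h_ℓ = 0}` and domains `D_ℓ = {h_ℓ ≤ γ_f}`, continuous decrease functions `Δh_ℓ`,
and relaxation functions `β_ℓ` satisfying the relaxed decrease, invariance, and
network-wide relaxation conditions), the sum `h(x) = Σ_ℓ h_ℓ(x_ℓ)` is a network-level
CBF: its safe set is the product of the local safe sets, safe set and domain are
nonempty and compact, `h` is continuous, a continuous positive decrease function exists
on the region of attraction, and the safe set can be rendered invariant. -/
theorem stmt_9 {L : ℕ} (hL : 1 ≤ L) (n m : Fin L → ℕ)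
    (Nb : Fin L → Finset (Fin L)) (hself : ∀ ℓ, ℓ ∈ Nb ℓ)
    (U : (ℓ : Fin L) → Set (Fin (m ℓ) → ℝ)) (hUne : ∀ ℓ, (U ℓ).Nonempty)
    (f : (ℓ : Fin L) → ((j : {j // j ∈ Nb ℓ}) → (Fin (n j.1) → ℝ)) →
          (Fin (m ℓ) → ℝ) → (Fin (n ℓ) → ℝ))
    (γf : ℝ) (hγf : 0 < γf)
    (h : (ℓ : Fin L) → (Fin (n ℓ) → ℝ) → ℝ)
    (hcont : ∀ ℓ, Continuous (h ℓ))
    (hnonneg : ∀ ℓ xℓ, 0 ≤ h ℓ xℓ)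
    (S : (ℓ : Fin L) → Set (Fin (n ℓ) → ℝ))
    (hS : ∀ ℓ, S ℓ = {xℓ | h ℓ xℓ = 0})
    (D : (ℓ : Fin L) → Set (Fin (n ℓ) → ℝ))
    (hD : ∀ ℓ, D ℓ = {xℓ | h ℓ xℓ ≤ γf})
    (hSne : ∀ ℓ, (S ℓ).Nonempty) (hScpt : ∀ ℓ, IsCompact (S ℓ))
    (hDne : ∀ ℓ, (D ℓ).Nonempty) (hDcpt : ∀ ℓ, IsCompact (D ℓ))
    (Δh : (ℓ : Fin L) → (Fin (n ℓ) → ℝ) → ℝ)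
    (hΔcont : ∀ ℓ, Continuous (Δh ℓ))
    (hΔnonneg : ∀ ℓ, ∀ xℓ ∈ D ℓ, 0 ≤ Δh ℓ xℓ)
    (hΔpos : ∀ ℓ, ∀ xℓ ∈ D ℓ \ S ℓ, 0 < Δh ℓ xℓ)
    (β : (ℓ : Fin L) → (((j : {j // j ∈ Nb ℓ}) → (Fin (n j.1) → ℝ)) → ℝ))
    -- (i) relaxed local decrease condition
    (hdec : ∀ ℓ, ∀ x : (j : Fin L) → Fin (n j) → ℝ, (∀ j, x j ∈ D j) →
      sInf ((fun uℓ => h ℓ (f ℓ (fun j => x j.1) uℓ)) '' U ℓ) - h ℓ (x ℓ)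
        ≤ -Δh ℓ (x ℓ) + β ℓ (fun j => x j.1))
    -- (ii) local invariance condition
    (hinv : ∀ ℓ, ∀ x : (j : Fin L) → Fin (n j) → ℝ,
      (∀ j : {j // j ∈ Nb ℓ}, x j.1 ∈ S j.1) →
      sInf ((fun uℓ => h ℓ (f ℓ (fun j => x j.1) uℓ)) '' U ℓ) = 0)
    -- (iii) network-wide relaxation condition
    (hβ : ∀ x : (j : Fin L) → Fin (n j) → ℝ, (∀ j, x j ∈ D j) →
      ∑ ℓ, β ℓ (fun j => x j.1) ≤ 0) :
    -- (1) safe set identity, nonemptiness, compactness, continuity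
    ({x : (ℓ : Fin L) → Fin (n ℓ) → ℝ | ∑ ℓ, h ℓ (x ℓ) ≤ 0} = Set.univ.pi S ∧
      ({x : (ℓ : Fin L) → Fin (n ℓ) → ℝ | ∑ ℓ, h ℓ (x ℓ) ≤ 0}).Nonempty ∧
      IsCompact {x : (ℓ : Fin L) → Fin (n ℓ) → ℝ | ∑ ℓ, h ℓ (x ℓ) ≤ 0} ∧
      ({x : (ℓ : Fin L) → Fin (n ℓ) → ℝ | ∑ ℓ, h ℓ (x ℓ) ≤ γf}).Nonempty ∧
      IsCompact {x : (ℓ : Fin L) → Fin (n ℓ) → ℝ | ∑ ℓ, h ℓ (x ℓ) ≤ γf} ∧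
      Continuous (fun x : (ℓ : Fin L) → Fin (n ℓ) → ℝ => ∑ ℓ, h ℓ (x ℓ))) ∧
    -- (2) network-level decrease on the region of attraction
    (∃ Δhglob : ((ℓ : Fin L) → Fin (n ℓ) → ℝ) → ℝ, Continuous Δhglob ∧
      (∀ x : (ℓ : Fin L) → Fin (n ℓ) → ℝ,
        0 < ∑ ℓ, h ℓ (x ℓ) → ∑ ℓ, h ℓ (x ℓ) ≤ γf → 0 < Δhglob x) ∧
      (∀ x : (ℓ : Fin L) → Fin (n ℓ) → ℝ,
        0 < ∑ ℓ, h ℓ (x ℓ) → ∑ ℓ, h ℓ (x ℓ) ≤ γf →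
        sInf ((fun u : (ℓ : Fin L) → Fin (m ℓ) → ℝ =>
            ∑ ℓ, h ℓ (f ℓ (fun j => x j.1) (u ℓ))) '' Set.univ.pi U)
          - (∑ ℓ, h ℓ (x ℓ)) ≤ -Δhglob x)) ∧
    -- (3) invariance on the safe set
    (∀ x : (ℓ : Fin L) → Fin (n ℓ) → ℝ, ∑ ℓ, h ℓ (x ℓ) ≤ 0 →
      sInf ((fun u : (ℓ : Fin L) → Fin (m ℓ) → ℝ =>
          ∑ ℓ, h ℓ (f ℓ (fun j => x j.1) (u ℓ))) '' Set.univ.pi U) ≤ 0) := by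
  have hL0 : 0 < L := hL
  -- basic facts
  have hsumnonneg : ∀ x : (ℓ : Fin L) → Fin (n ℓ) → ℝ, 0 ≤ ∑ ℓ, h ℓ (x ℓ) :=
    fun x => Finset.sum_nonneg fun ℓ _ => hnonneg ℓ (x ℓ)
  have hsumcont : Continuous (fun x : (ℓ : Fin L) → Fin (n ℓ) → ℝ => ∑ ℓ, h ℓ (x ℓ)) :=
    continuous_finset_sum _ fun ℓ _ => (hcont ℓ).comp (continuous_apply ℓ)
  -- safe set identity
  have hsafe_eq : {x : (ℓ : Fin L) → Fin (n ℓ) → ℝ | ∑ ℓ, h ℓ (x ℓ) ≤ 0}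
      = Set.univ.pi S := by
    ext x
    simp only [Set.mem_setOf_eq, Set.mem_pi, Set.mem_univ, forall_true_left, hS]
    constructor
    · intro hx ℓ
      exact (Finset.sum_eq_zero_iff_of_nonneg (fun ℓ _ => hnonneg ℓ (x ℓ))).mp
        (le_antisymm hx (hsumnonneg x)) ℓ (Finset.mem_univ ℓ)
    · intro hx
      exact le_of_eq (Finset.sum_eq_zero fun ℓ _ => hx ℓ)
  -- a point in the safe set
  have hex : ∀ ℓ, ∃ y : Fin (n ℓ) → ℝ, h ℓ y = 0 := by
    intro ℓ
    obtain ⟨y, hy⟩ := hSne ℓ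
    rw [hS ℓ, Set.mem_setOf_eq] at hy
    exact ⟨y, hy⟩
  choose x0 hx0 using hex
  have hx0safe : (∑ ℓ, h ℓ (x0 ℓ)) = 0 := Finset.sum_eq_zero fun ℓ _ => hx0 ℓ
  -- membership in domain implies each coordinate in D
  have hmemD : ∀ x : (ℓ : Fin L) → Fin (n ℓ) → ℝ, (∑ ℓ, h ℓ (x ℓ)) ≤ γf →
      ∀ j, x j ∈ D j := by
    intro x hx j
    rw [hD j]
    exact le_trans (Finset.single_le_sum (fun ℓ _ => hnonneg ℓ (x ℓ)) (Finset.mem_univ j)) hx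
  -- global inf bounded by sum of local infs
  have hinfle : ∀ x : (j : Fin L) → Fin (n j) → ℝ,
      sInf ((fun u : (ℓ : Fin L) → Fin (m ℓ) → ℝ =>
          ∑ ℓ, h ℓ (f ℓ (fun j => x j.1) (u ℓ))) '' Set.univ.pi U)
        ≤ ∑ ℓ, sInf ((fun uℓ => h ℓ (f ℓ (fun j => x j.1) uℓ)) '' U ℓ) := by
    intro x
    exact sInf_sum_le_sum_sInf hL0 U hUne
      (fun ℓ uℓ => h ℓ (f ℓ (fun j => x j.1) uℓ)) (fun ℓ uℓ => hnonneg ℓ _)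
  have hDglobne : ({x : (ℓ : Fin L) → Fin (n ℓ) → ℝ | ∑ ℓ, h ℓ (x ℓ) ≤ γf}).Nonempty := by
    refine ⟨x0, ?_⟩
    simp only [Set.mem_setOf_eq, hx0safe]
    exact hγf.le
  refine ⟨⟨hsafe_eq, ⟨x0, by simp [hx0safe]⟩, ?_, hDglobne, ?_, hsumcont⟩, ?_, ?_⟩
  · -- safe set compact
    rw [hsafe_eq]; exact isCompact_univ_pi hScpt
  · -- domain compact
    refine IsCompact.of_isClosed_subset (isCompact_univ_pi hDcpt)
      (isClosed_le hsumcont continuous_const) ?_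
    intro x hx
    exact fun j _ => hmemD x hx j
  · -- part (2)
    refine ⟨fun x => ∑ ℓ, Δh ℓ (x ℓ),
      continuous_finset_sum _ fun ℓ _ => (hΔcont ℓ).comp (continuous_apply ℓ), ?_, ?_⟩
    · intro x hpos hle
      have hxD := hmemD x hle
      obtain ⟨ℓ0, -, hℓ0⟩ := Finset.exists_lt_of_sum_lt (by simpa using hpos :
        ∑ _ℓ : Fin L, (0 : ℝ) < ∑ ℓ, h ℓ (x ℓ))
      refine Finset.sum_pos' (fun ℓ _ => hΔnonneg ℓ _ (hxD ℓ)) ⟨ℓ0, Finset.mem_univ ℓ0, ?_⟩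
      refine hΔpos ℓ0 _ ⟨hxD ℓ0, ?_⟩
      rw [hS ℓ0]; exact fun hc => absurd hc (by simpa using hℓ0.ne')
    · intro x hpos hle
      have hxD := hmemD x hle
      have h1 := hinfle x
      have h2 : ∑ ℓ, (sInf ((fun uℓ => h ℓ (f ℓ (fun j => x j.1) uℓ)) '' U ℓ) - h ℓ (x ℓ))
          ≤ ∑ ℓ, (-Δh ℓ (x ℓ) + β ℓ (fun j => x j.1)) :=
        Finset.sum_le_sum fun ℓ _ => hdec ℓ x hxD
      rw [Finset.sum_sub_distrib, Finset.sum_add_distrib, Finset.sum_neg_distrib] at h2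
      have h3 := hβ x hxD
      linarith
  · -- part (3)
    intro x hx
    have hxS : ∀ j, x j ∈ S j := by
      have : x ∈ Set.univ.pi S := hsafe_eq ▸ hx
      exact fun j => this j (Set.mem_univ j)
    have h1 := hinfle x
    have h2 : ∀ ℓ, sInf ((fun uℓ => h ℓ (f ℓ (fun j => x j.1) uℓ)) '' U ℓ) = 0 :=
      fun ℓ => hinv ℓ x (fun j => hxS j.1)
    calc sInf ((fun u : (ℓ : Fin L) → Fin (m ℓ) → ℝ =>
            ∑ ℓ, h ℓ (f ℓ (fun j => x j.1) (u ℓ))) '' Set.univ.pi U)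
        ≤ ∑ ℓ, sInf ((fun uℓ => h ℓ (f ℓ (fun j => x j.1) uℓ)) '' U ℓ) := h1
      _ = 0 := Finset.sum_eq_zero fun ℓ _ => h2 ℓ
end

section
/- Consider agents ℓ ∈ {1,…,L} with neighbor sets N_ℓ ⊆ {1,…,L}, ℓ ∈ N_ℓ, nonempty compact input sets U_ℓ ⊆ ℝ^{m_ℓ}, continuous dynamics f_ℓ : (×_{j∈N_ℓ} ℝ^{n_j}) × ℝ^{m_ℓ} → ℝ^{n_ℓ}, continuous constraint functions c_ℓ : ℝ^{n_ℓ} → ℝ^{n_{x,ℓ}}, continuous nonnegative terminal functions h_{f,ℓ} : ℝ^{n_ℓ} → ℝ with terminal safe sets S_{f,ℓ} := {x_ℓ | h_{f,ℓ}(x_ℓ) = 0}, a horizon N ≥ 1, α_f > 0, and tightenings 0 = Δ_0 ≤ Δ_1 ≤ ⋯ ≤ Δ_{N−1}. Define the D-PCBF value function h_DPB(x) := min over input sequences u = (u_ℓ^i) ∈ ×_{ℓ,i} U_ℓ of Σ_ℓ ( α_f h_{f,ℓ}(x_ℓ^N) + Σ_{i=0}^{N−1} max(0, Δ_i + max_k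 c_{ℓ,k}(x_ℓ^i)) ), where x_ℓ^0 := x_ℓ and x_ℓ^{i+1} := f_ℓ(x_{N_ℓ}^i, u_ℓ^i). Assume: (a) the terminal invariance condition holds with attainment, i.e., whenever x_j ∈ S_{f,j} for all j ∈ N_ℓ there exists u_ℓ ∈ U_ℓ with h_{f,ℓ}(f_ℓ(x_{N_ℓ}, u_ℓ)) = 0; and (b) the terminal safe sets satisfy the tightened state constraints, i.e., for every ℓ and every x_ℓ ∈ S_{f,ℓ}, c_{ℓ,k}(x_ℓ) ≤ −Δ_{N−1} for all k. Then for every global state x with x_ℓ ∈ S_{f,ℓ} for all ℓ, h_DPB(x) = 0; that is, the product of the terminal safe sets is contained in the D-PCBF safe set S_DPB := {x | h_DPB(x) = 0}. -/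
/-- Predicted states of the multi-agent system: `predState Nb f x u i` is the global
state after `i` steps of the coupled dynamics `x_ℓ⁺ = f_ℓ(x_{N_ℓ}, u_ℓ^i)` started at
`x` under the input sequence `u`. -/
noncomputable def predState {L : ℕ} {n m : Fin L → ℕ} (Nb : Fin L → Finset (Fin L))
    (f : (ℓ : Fin L) → ((j : {j // j ∈ Nb ℓ}) → (Fin (n j.1) → ℝ)) →
          (Fin (m ℓ) → ℝ) → (Fin (n ℓ) → ℝ))
    (x : (ℓ : Fin L) → Fin (n ℓ) → ℝ)
    (u : (ℓ : Fin L) → ℕ → Fin (m ℓ) → ℝ) : ℕ → (ℓ : Fin L) → Fin (n ℓ) → ℝ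
  | 0 => x
  | i + 1 => fun ℓ => f ℓ (fun j => predState Nb f x u i j.1) (u ℓ i)

/-- The reduced D-PCBF cost: total optimal slack of the predictive optimization, with
stage slacks `max(0, Δ_i + max_k c_{ℓ,k}(x_ℓ^i))` and terminal slacks `h_{f,ℓ}(x_ℓ^N)`
weighted by `α_f`. -/
noncomputable def Jcost {L : ℕ} {n m : Fin L → ℕ} {nx : Fin L → ℕ}
    (Nb : Fin L → Finset (Fin L))
    (f : (ℓ : Fin L) → ((j : {j // j ∈ Nb ℓ}) → (Fin (n j.1) → ℝ)) →
          (Fin (m ℓ) → ℝ) → (Fin (n ℓ) → ℝ))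
    (c : (ℓ : Fin L) → (Fin (n ℓ) → ℝ) → Fin (nx ℓ) → ℝ)
    (hf : (ℓ : Fin L) → (Fin (n ℓ) → ℝ) → ℝ)
    (N : ℕ) (αf : ℝ) (Δt : ℕ → ℝ)
    (x : (ℓ : Fin L) → Fin (n ℓ) → ℝ)
    (u : (ℓ : Fin L) → ℕ → Fin (m ℓ) → ℝ) : ℝ :=
  ∑ ℓ, (αf * hf ℓ (predState Nb f x u N ℓ) +
    ∑ i ∈ Finset.range N, max 0 (Δt i + ⨆ k, c ℓ (predState Nb f x u i ℓ) k))

/-- Safe-set containment of the D-PCBF: under the terminal invariance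
condition with attainment and the containment of the terminal safe sets in the
`Δ_{N−1}`-tightened state constraints, every global state in the product of the terminal
safe sets `S_{f,ℓ} = {h_{f,ℓ} = 0}` has D-PCBF value `h_DPB(x) = 0`. -/
theorem stmt_18 {L : ℕ} (hL : 1 ≤ L) (n m nx : Fin L → ℕ) (hnx : ∀ ℓ, 0 < nx ℓ)
    (Nb : Fin L → Finset (Fin L)) (hself : ∀ ℓ, ℓ ∈ Nb ℓ)
    (U : (ℓ : Fin L) → Set (Fin (m ℓ) → ℝ))
    (hUne : ∀ ℓ, (U ℓ).Nonempty) (hUcpt : ∀ ℓ, IsCompact (U ℓ))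
    (f : (ℓ : Fin L) → ((j : {j // j ∈ Nb ℓ}) → (Fin (n j.1) → ℝ)) →
          (Fin (m ℓ) → ℝ) → (Fin (n ℓ) → ℝ))
    (hfcont : ∀ ℓ, Continuous (fun p : ((j : {j // j ∈ Nb ℓ}) → (Fin (n j.1) → ℝ)) ×
        (Fin (m ℓ) → ℝ) => f ℓ p.1 p.2))
    (c : (ℓ : Fin L) → (Fin (n ℓ) → ℝ) → Fin (nx ℓ) → ℝ)
    (hccont : ∀ ℓ, Continuous (c ℓ))
    (hf : (ℓ : Fin L) → (Fin (n ℓ) → ℝ) → ℝ)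
    (hhfcont : ∀ ℓ, Continuous (hf ℓ))
    (hhfnonneg : ∀ ℓ xℓ, 0 ≤ hf ℓ xℓ)
    (Sf : (ℓ : Fin L) → Set (Fin (n ℓ) → ℝ))
    (hSf : ∀ ℓ, Sf ℓ = {xℓ | hf ℓ xℓ = 0})
    (N : ℕ) (hN : 1 ≤ N) (αf : ℝ) (hαf : 0 < αf)
    (Δt : ℕ → ℝ) (hΔt0 : Δt 0 = 0) (hΔtmono : ∀ i, i + 1 < N → Δt i ≤ Δt (i + 1))
    -- (a) terminal invariance condition with attainment
    (hinv : ∀ ℓ, ∀ x : (j : Fin L) → Fin (n j) → ℝ,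
      (∀ j : {j // j ∈ Nb ℓ}, x j.1 ∈ Sf j.1) →
      ∃ uℓ ∈ U ℓ, hf ℓ (f ℓ (fun j => x j.1) uℓ) = 0)
    -- (b) terminal safe sets satisfy the tightened state constraints
    (hcon : ∀ ℓ, ∀ xℓ ∈ Sf ℓ, ∀ k, c ℓ xℓ k ≤ -Δt (N - 1)) :
    ∀ x : (ℓ : Fin L) → Fin (n ℓ) → ℝ, (∀ ℓ, x ℓ ∈ Sf ℓ) →
      sInf (Jcost Nb f c hf N αf Δt x ''
        {u : (ℓ : Fin L) → ℕ → Fin (m ℓ) → ℝ | ∀ ℓ i, u ℓ i ∈ U ℓ}) = 0 := by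
  intro x hx
  classical
  -- pick function
  have pickP : ∀ ℓ (X : (j : Fin L) → Fin (n j) → ℝ),
      ∃ uℓ ∈ U ℓ, ((∀ j : {j // j ∈ Nb ℓ}, X j.1 ∈ Sf j.1) →
        hf ℓ (f ℓ (fun j => X j.1) uℓ) = 0) := by
    intro ℓ X
    by_cases h : ∀ j : {j // j ∈ Nb ℓ}, X j.1 ∈ Sf j.1
    · obtain ⟨uℓ, hu, he⟩ := hinv ℓ X h
      exact ⟨uℓ, hu, fun _ => he⟩
    · exact ⟨(hUne ℓ).choose, (hUne ℓ).choose_spec, fun h' => absurd h' h⟩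
  let pick : (ℓ : Fin L) → ((j : Fin L) → Fin (n j) → ℝ) → (Fin (m ℓ) → ℝ) :=
    fun ℓ X => (pickP ℓ X).choose
  have pickU : ∀ ℓ X, pick ℓ X ∈ U ℓ := fun ℓ X => (pickP ℓ X).choose_spec.1
  have pickS : ∀ ℓ X, (∀ j : {j // j ∈ Nb ℓ}, X j.1 ∈ Sf j.1) →
      hf ℓ (f ℓ (fun j => X j.1) (pick ℓ X)) = 0 :=
    fun ℓ X => (pickP ℓ X).choose_spec.2
  -- trajectory
  let seq : ℕ → (j : Fin L) → Fin (n j) → ℝ :=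
    fun i => Nat.rec x (fun _ X => fun ℓ => f ℓ (fun j => X j.1) (pick ℓ X)) i
  let u : (ℓ : Fin L) → ℕ → Fin (m ℓ) → ℝ := fun ℓ i => pick ℓ (seq i)
  have hseqS : ∀ i ℓ, seq i ℓ ∈ Sf ℓ := by
    intro i
    induction i with
    | zero => exact hx
    | succ i ih =>
      intro ℓ
      have := pickS ℓ (seq i) (fun j => ih j.1)
      rw [hSf ℓ]
      exact this
  have hpred : ∀ i, predState Nb f x u i = seq i := by
    intro i
    induction i with
    | zero => rfl
    | succ i ih =>
      funext ℓ
      show f ℓ (fun j => predState Nb f x u i j.1) (u ℓ i) = _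
      rw [ih]
  have huU : u ∈ {u : (ℓ : Fin L) → ℕ → Fin (m ℓ) → ℝ | ∀ ℓ i, u ℓ i ∈ U ℓ} :=
    fun ℓ i => pickU ℓ (seq i)
  -- Δt bound
  have hΔle : ∀ i, i < N → Δt i ≤ Δt (N - 1) := by
    have key : ∀ b, b < N → ∀ a, a ≤ b → Δt a ≤ Δt b := by
      intro b
      induction b with
      | zero =>
        intro _ a ha
        have : a = 0 := Nat.le_zero.mp ha
        simp [this]
      | succ b ih =>
        intro hb a ha
        rcases Nat.lt_succ_iff_lt_or_eq.mp (Nat.lt_succ_of_le ha) with h | h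
        · exact le_trans (ih (by omega) a (by omega)) (hΔtmono b hb)
        · subst h; exact le_refl _
    intro i hi
    exact key (N - 1) (by omega) i (by omega)
  -- cost is zero at u
  have hJ0 : Jcost Nb f c hf N αf Δt x u = 0 := by
    unfold Jcost
    apply Finset.sum_eq_zero
    intro ℓ _
    have hterm : hf ℓ (predState Nb f x u N ℓ) = 0 := by
      rw [hpred N]
      have := hseqS N ℓ
      rwa [hSf ℓ] at this
    rw [hterm, mul_zero, zero_add]
    apply Finset.sum_eq_zero
    intro i hi
    have hiN : i < N := Finset.mem_range.mp hi
    have hsup : (⨆ k, c ℓ (predState Nb f x u i ℓ) k) ≤ -Δt (N - 1) := by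
      haveI : Nonempty (Fin (nx ℓ)) := ⟨⟨0, hnx ℓ⟩⟩
      apply ciSup_le
      intro k
      rw [hpred i]
      exact hcon ℓ (seq i ℓ) (hseqS i ℓ) k
    have : Δt i + (⨆ k, c ℓ (predState Nb f x u i ℓ) k) ≤ 0 := by
      have := hΔle i hiN
      linarith
    exact max_eq_left this
  have hmem : (0 : ℝ) ∈ Jcost Nb f c hf N αf Δt x ''
      {u : (ℓ : Fin L) → ℕ → Fin (m ℓ) → ℝ | ∀ ℓ i, u ℓ i ∈ U ℓ} :=
    ⟨u, huU, hJ0⟩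
  have hlb : ∀ y ∈ Jcost Nb f c hf N αf Δt x ''
      {u : (ℓ : Fin L) → ℕ → Fin (m ℓ) → ℝ | ∀ ℓ i, u ℓ i ∈ U ℓ}, (0:ℝ) ≤ y := by
    rintro y ⟨v, _, rfl⟩
    unfold Jcost
    apply Finset.sum_nonneg
    intro ℓ _
    exact add_nonneg (mul_nonneg hαf.le (hhfnonneg ℓ _))
      (Finset.sum_nonneg fun i _ => le_max_left 0 _)
  exact le_antisymm (csInf_le ⟨0, hlb⟩ hmem) (le_csInf ⟨0, hmem⟩ hlb)
end
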